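/- For every integer n ≥ 0 and every x ∈ ℤ, ⟨UⁿΨ, e₁ˣ⟩ = ψ₁ c_x(p_n¹) + ψ₂ c_x(q_n¹) and ⟨UⁿΨ, e₂ˣ⟩ = ψ₁ c_x(p_n²) + ψ₂ c_x(q_n²). -/

import Mathlib

/-- The Laurent polynomial `s(z + z⁻¹)/2`. -/
noncomputable def zArg (s : ℝ) : LaurentPolynomial ℂ :=
  ((s : ℂ) / 2) • (LaurentPolynomial.T 1 + LaurentPolynomial.T (-1))

/-- The Laurent polynomial `Tₙ(s(z + z⁻¹)/2)` (Chebyshev polynomial of the first kind). -/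
noncomputable def chebTz (s : ℝ) (n : ℤ) : LaurentPolynomial ℂ :=
  Polynomial.aeval (zArg s) (Polynomial.Chebyshev.T ℂ n)

/-- The Laurent polynomial `Uₙ(s(z + z⁻¹)/2)` (Chebyshev polynomial of the second kind). -/
noncomputable def chebUz (s : ℝ) (n : ℤ) : LaurentPolynomial ℂ :=
  Polynomial.aeval (zArg s) (Polynomial.Chebyshev.U ℂ n)

/-- `p_n¹(z) = Tₙ(s(z+z⁻¹)/2) + (s/2)(z−z⁻¹) U_{n−1}(s(z+z⁻¹)/2)`. -/
noncomputable def pn1 (s : ℝ) (n : ℕ) : LaurentPolynomial ℂ :=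
  chebTz s (n : ℤ) +
    ((s : ℂ) / 2) • ((LaurentPolynomial.T 1 - LaurentPolynomial.T (-1)) * chebUz s ((n : ℤ) - 1))

/-- `p_n²(z) = t z U_{n−1}(s(z+z⁻¹)/2)`. -/
noncomputable def pn2 (s t : ℝ) (n : ℕ) : LaurentPolynomial ℂ :=
  (t : ℂ) • (LaurentPolynomial.T 1 * chebUz s ((n : ℤ) - 1))

/-- `q_n¹(z) = −t z⁻¹ U_{n−1}(s(z+z⁻¹)/2)`. -/
noncomputable def qn1 (s t : ℝ) (n : ℕ) : LaurentPolynomial ℂ :=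
  -((t : ℂ) • (LaurentPolynomial.T (-1) * chebUz s ((n : ℤ) - 1)))

/-- `q_n²(z) = Tₙ(s(z+z⁻¹)/2) − (s/2)(z−z⁻¹) U_{n−1}(s(z+z⁻¹)/2)`. -/
noncomputable def qn2 (s : ℝ) (n : ℕ) : LaurentPolynomial ℂ :=
  chebTz s (n : ℤ) -
    ((s : ℂ) / 2) • ((LaurentPolynomial.T 1 - LaurentPolynomial.T (-1)) * chebUz s ((n : ℤ) - 1))

/-!
The operator `T = X + iσY` acts as `V` on the `+1`-eigenspace of `σ` and as `V*` on the
`-1`-eigenspace, and it commutes with `V`, `W` and `σ`. Hence `V` shifts `e₁ˣ` and `e₂ˣ` by `+1`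
and `-1` respectively, while `W` exchanges the two families: `W e₁ˣ = e₂ˣ⁺¹`, `W e₂ˣ = -e₁ˣ⁻¹`.
In particular `e₁ˣ = Vˣ e` and `e₂ˣ = V⁻ˣ ε e` are orbits of a unitary, orthonormal by (QWR), and
orthogonal to each other because they lie in different eigenspaces of `σ`.
Writing a vector `∑ aₓ e₁ˣ + ∑ bₓ e₂ˣ` as the pair of Laurent polynomials `(∑ aₓ zˣ, ∑ bₓ zˣ)`,
`U = sV + tW` becomes multiplication by `[[s z, -t z⁻¹], [t z, s z⁻¹]]`, and the Chebyshev
recurrences show that `(ψ₁ p_n¹ + ψ₂ q_n¹, ψ₁ p_n² + ψ₂ q_n²)` satisfies the same recursion.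
-/

section Recurrences

open LaurentPolynomial

lemma chebTz_add_one (s : ℝ) (n : ℤ) :
    chebTz s (n + 1) = zArg s * chebTz s n - (1 - zArg s ^ 2) * chebUz s (n - 1) := by
  have h := Polynomial.Chebyshev.T_eq_X_mul_T_sub_pol_U ℂ (n - 1)
  rw [sub_add_cancel, show n - 1 + 2 = n + 1 by ring] at h
  simp [chebTz, chebUz, h]

lemma chebUz_eq (s : ℝ) (n : ℤ) : chebUz s n = zArg s * chebUz s (n - 1) + chebTz s n := by
  have h := Polynomial.Chebyshev.U_eq_X_mul_U_add_T ℂ (n - 1)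
  rw [sub_add_cancel] at h
  simp [chebTz, chebUz, h]

lemma C_eq_two_mul_C_half (a : ℂ) : (C a : ℂ[T;T⁻¹]) = 2 * C (a / 2) := by
  rw [← map_ofNat C 2, ← map_mul, mul_div_cancel₀ _ two_ne_zero]

lemma two_mul_C_half_sq_add_C_sq {s t : ℝ} (hst : s ^ 2 + t ^ 2 = 1) :
    (2 * C ((s : ℂ) / 2) : ℂ[T;T⁻¹]) ^ 2 + C (t : ℂ) ^ 2 = 1 := by
  rw [← C_eq_two_mul_C_half, ← map_pow, ← map_pow, ← map_add]
  exact_mod_cast congrArg C (by exact_mod_cast hst : ((s ^ 2 + t ^ 2 : ℝ) : ℂ) = 1)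

lemma T_one_mul_T_neg_one : (T 1 * T (-1) : ℂ[T;T⁻¹]) = 1 := by
  rw [← T_add, add_neg_cancel, T_zero]

variable {s t : ℝ} (n : ℕ)

lemma pn1_succ (hst : s ^ 2 + t ^ 2 = 1) :
    pn1 s (n + 1) = (s : ℂ) • (T 1 * pn1 s n) - (t : ℂ) • (T (-1) * pn2 s t n) := by
  rw [pn1, pn1, pn2, Nat.cast_succ, add_sub_cancel_right, chebTz_add_one, chebUz_eq s n]
  simp only [zArg, smul_eq_C_mul, C_eq_two_mul_C_half (s : ℂ)]
  linear_combination (chebUz s (n - 1) * T 1 * T (-1)) * two_mul_C_half_sq_add_C_sq hst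
    + chebUz s (n - 1) * T_one_mul_T_neg_one

lemma pn2_succ :
    pn2 s t (n + 1) = (t : ℂ) • (T 1 * pn1 s n) + (s : ℂ) • (T (-1) * pn2 s t n) := by
  rw [pn1, pn2, pn2, Nat.cast_succ, add_sub_cancel_right, chebUz_eq s n]
  simp only [zArg, smul_eq_C_mul, C_eq_two_mul_C_half (s : ℂ)]
  ring

lemma qn1_succ :
    qn1 s t (n + 1) = (s : ℂ) • (T 1 * qn1 s t n) - (t : ℂ) • (T (-1) * qn2 s n) := by
  rw [qn1, qn1, qn2, Nat.cast_succ, add_sub_cancel_right, chebUz_eq s n]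
  simp only [zArg, smul_eq_C_mul, C_eq_two_mul_C_half (s : ℂ)]
  ring

lemma qn2_succ (hst : s ^ 2 + t ^ 2 = 1) :
    qn2 s (n + 1) = (t : ℂ) • (T 1 * qn1 s t n) + (s : ℂ) • (T (-1) * qn2 s n) := by
  rw [qn1, qn2, qn2, Nat.cast_succ, add_sub_cancel_right, chebTz_add_one, chebUz_eq s n]
  simp only [zArg, smul_eq_C_mul, C_eq_two_mul_C_half (s : ℂ)]
  linear_combination (chebUz s (n - 1) * T 1 * T (-1)) * two_mul_C_half_sq_add_C_sq hst
    + chebUz s (n - 1) * T_one_mul_T_neg_one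

lemma pn1_zero : pn1 s 0 = 1 := by
  simp [pn1, chebTz, chebUz]

lemma pn2_zero : pn2 s t 0 = 0 := by
  simp [pn2, chebUz]

lemma qn1_zero : qn1 s t 0 = 0 := by
  simp [qn1, chebUz]

lemma qn2_zero : qn2 s 0 = 1 := by
  simp [qn2, chebTz, chebUz]

end Recurrences

namespace LaurentPolynomial

variable {R M N : Type*} [CommSemiring R] [AddCommMonoid M] [Module R M]
  [AddCommMonoid N] [Module R N]

variable (R) in
noncomputable def linearCombination (f : ℤ → M) : R[T;T⁻¹] →ₗ[R] M :=
  Finsupp.linearCombination R f ∘ₗ (AddMonoidAlgebra.coeffLinearEquiv R).toLinearMap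

lemma linearCombination_apply (f : ℤ → M) (p : R[T;T⁻¹]) :
    linearCombination R f p = Finsupp.linearCombination R f p.coeff :=
  rfl

lemma linearCombination_C_mul_T (f : ℤ → M) (a : R) (n : ℤ) :
    linearCombination R f (C a * T n) = a • f n := by
  rw [← single_eq_C_mul_T, linearCombination_apply, AddMonoidAlgebra.coeff_single,
    Finsupp.linearCombination_single]

lemma linearCombination_one (f : ℤ → M) : linearCombination R f 1 = f 0 := by
  simpa using linearCombination_C_mul_T (R := R) f 1 0

lemma map_linearCombination {F : Type*} [FunLike F M N] [LinearMapClass F R M N] (A : F)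
    {f : ℤ → M} {g : ℤ → N} {k : ℤ} (hA : ∀ x, A (f x) = g (x + k)) (p : R[T;T⁻¹]) :
    A (linearCombination R f p) = linearCombination R g (T k * p) := by
  induction p using LaurentPolynomial.induction_on' with
  | add p q hp hq => rw [map_add, map_add, hp, hq, mul_add, map_add]
  | C_mul_T n a =>
    rw [linearCombination_C_mul_T, map_smul, hA, mul_left_comm, ← T_add, add_comm,
      linearCombination_C_mul_T]

end LaurentPolynomial

section Orthonormal

open LaurentPolynomial

variable {𝕜 E : Type*} [RCLike 𝕜] [NormedAddCommGroup E] [InnerProductSpace 𝕜 E]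

lemma Orthonormal.inner_linearCombination_laurent {v : ℤ → E} (hv : Orthonormal 𝕜 v)
    (p : 𝕜[T;T⁻¹]) (x : ℤ) : inner 𝕜 (v x) (linearCombination 𝕜 v p) = p.coeff x :=
  hv.inner_right_finsupp _ _

lemma inner_linearCombination_eq_zero {u : E} {v : ℤ → E} (h : ∀ x, inner 𝕜 u (v x) = 0)
    (p : 𝕜[T;T⁻¹]) : inner 𝕜 u (linearCombination 𝕜 v p) = 0 := by
  simp [linearCombination_apply, Finsupp.linearCombination_apply, Finsupp.inner_sum,
    inner_smul_right, h]

end Orthonormal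

section Walk

open LaurentPolynomial

variable {M : Type*} [AddCommGroup M] [Module ℂ M] {V W : Module.End ℂ M} {f g : ℤ → M}

lemma walk_step (hVf : ∀ x, V (f x) = f (x + 1)) (hVg : ∀ x, V (g x) = g (x - 1))
    (hWf : ∀ x, W (f x) = g (x + 1)) (hWg : ∀ x, W (g x) = -f (x - 1))
    (a b : ℂ) (p q : ℂ[T;T⁻¹]) :
    (a • V + b • W) (linearCombination ℂ f p + linearCombination ℂ g q) =
      linearCombination ℂ f (a • (T 1 * p) - b • (T (-1) * q)) +
        linearCombination ℂ g (b • (T 1 * p) + a • (T (-1) * q)) := by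
  have hVq := map_linearCombination V (k := -1) (fun x => by rw [hVg, sub_eq_add_neg]) q
  have hWq := map_linearCombination (-W) (k := -1)
    (fun x => by rw [LinearMap.neg_apply, hWg, neg_neg, sub_eq_add_neg]) q
  rw [LinearMap.neg_apply, neg_eq_iff_eq_neg] at hWq
  simp only [LinearMap.add_apply, LinearMap.smul_apply, map_add, map_smul, map_sub,
    map_linearCombination V hVf, map_linearCombination W hWf, hVq, hWq]
  module

lemma walk_pow_apply {s t : ℝ} (hst : s ^ 2 + t ^ 2 = 1)
    (hVf : ∀ x, V (f x) = f (x + 1)) (hVg : ∀ x, V (g x) = g (x - 1))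
    (hWf : ∀ x, W (f x) = g (x + 1)) (hWg : ∀ x, W (g x) = -f (x - 1))
    (ψ₁ ψ₂ : ℂ) (n : ℕ) :
    (((s : ℂ) • V + (t : ℂ) • W) ^ n) (ψ₁ • f 0 + ψ₂ • g 0) =
      linearCombination ℂ f (ψ₁ • pn1 s n + ψ₂ • qn1 s t n) +
        linearCombination ℂ g (ψ₁ • pn2 s t n + ψ₂ • qn2 s n) := by
  induction n with
  | zero =>
    simp [pn1_zero, pn2_zero, qn1_zero, qn2_zero, linearCombination_one]
  | succ n ih =>
    rw [pow_succ', Module.End.mul_apply, ih, walk_step hVf hVg hWf hWg, pn1_succ n hst,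
      pn2_succ, qn1_succ, qn2_succ n hst]
    simp only [mul_add, mul_smul_comm]
    congr 2 <;> module

end Walk

lemma eq_zpow_smul_of_smul_eq {G α : Type*} [Group G] [MulAction G α] (u : G) {f : ℤ → α}
    (hf : ∀ x, u • f x = f (x + 1)) (x : ℤ) : f x = u ^ x • f 0 := by
  induction x using Int.induction_on with
  | zero => rw [zpow_zero, one_smul]
  | succ k ih => rw [← hf, ih, smul_smul, ← zpow_one_add, add_comm]
  | pred k ih =>
    have h := hf (-k - 1)
    rw [sub_add_cancel, ih] at h
    rw [eq_inv_smul_iff.mpr h, smul_smul, ← zpow_neg_one, ← zpow_add, neg_add_eq_sub]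

section Hilbert

variable {𝕜 E : Type*} [RCLike 𝕜] [NormedAddCommGroup E] [InnerProductSpace 𝕜 E]
  [CompleteSpace E]

lemma Unitary.inner_smul_smul (u : unitary (E →L[𝕜] E)) (x y : E) :
    inner 𝕜 (u • x) (u • y) = inner 𝕜 x y :=
  Unitary.inner_map_map u x y

lemma Unitary.inner_zpow_smul_zpow_smul (u : unitary (E →L[𝕜] E)) (v : E) (i j : ℤ) :
    inner 𝕜 (u ^ i • v) (u ^ j • v) = inner 𝕜 v (u ^ (j - i) • v) := by
  rw [← inner_smul_smul (u ^ i) v (u ^ (j - i) • v), smul_smul, ← zpow_add, add_sub_cancel]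

lemma orthonormal_zpow_smul (u : unitary (E →L[𝕜] E)) {v : E} (hv : ‖v‖ = 1)
    (horth : ∀ m : ℕ, 0 < m → inner 𝕜 (((u : E →L[𝕜] E) ^ m) v) v = 0) :
    Orthonormal 𝕜 (fun x : ℤ => u ^ x • v) := by
  have horth' : ∀ m : ℕ, 0 < m → inner 𝕜 (u ^ (m : ℤ) • v) v = 0 := fun m hm => by
    rw [zpow_natCast, Submonoid.smul_def, SubmonoidClass.coe_pow]
    exact horth m hm
  rw [orthonormal_iff_ite]
  intro i j
  rw [Unitary.inner_zpow_smul_zpow_smul]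
  obtain ⟨m, hm | hm⟩ := Int.eq_nat_or_neg (j - i) <;>
    rcases Nat.eq_zero_or_pos m with rfl | hm0
  · simp [show i = j by omega, inner_self_eq_norm_sq_to_K, hv]
  · rw [if_neg (by omega), hm, ← inner_conj_symm, horth' m hm0, map_zero]
  · simp [show i = j by omega, inner_self_eq_norm_sq_to_K, hv]
  · rw [if_neg (by omega), hm, ← Unitary.inner_smul_smul (u ^ (m : ℤ)), smul_smul,
      ← zpow_add, add_neg_cancel, zpow_zero, one_smul, horth' m hm0]

lemma IsSelfAdjoint.inner_eq_zero_of_apply_eq_self_of_apply_eq_neg {σ : E →L[𝕜] E}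
    (hσ : IsSelfAdjoint σ) {u v : E} (hu : σ u = u) (hv : σ v = -v) : inner 𝕜 u v = 0 := by
  have h := hσ.isSymmetric u v
  rw [ContinuousLinearMap.coe_coe, hu, hv, inner_neg_right] at h
  exact self_eq_neg.mp h

end Hilbert

lemma Commute.smul_zpow_smul {M α : Type*} [Monoid M] [MulAction M α] {B : M} {u : Mˣ}
    (h : Commute B u) {v w : α} {k : ℤ} (hk : B • v = u ^ k • w) (x : ℤ) :
    B • u ^ x • v = u ^ (x + k) • w := by
  rw [Units.smul_def, smul_smul, (h.units_zpow_right x).eq, mul_smul, hk, ← Units.smul_def,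
    smul_smul, ← zpow_add]

lemma apply_eq_self_of_half_one_add_apply_eq {E : Type*} [NormedAddCommGroup E] [NormedSpace ℂ E]
    {σ : E →L[ℂ] E} {e : E} (h : ((2 : ℂ)⁻¹ • (1 + σ)) e = e) : σ e = e := by
  simp only [smul_add, add_apply, smul_apply, one_apply_eq_self] at h
  linear_combination (norm := module) (2 : ℂ) • h

section QuantumWalk

variable {H : Type*} [NormedAddCommGroup H] [InnerProductSpace ℂ H] [CompleteSpace H]

open ContinuousLinearMap

structure IsQuantumWalk (V W σ : H →L[ℂ] H) : Prop where
  V_mem_unitary : V ∈ unitary (H →L[ℂ] H)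
  adjoint_W_mul_W : adjoint W * W = 1
  W_mul_W : W * W = -1
  V_mul_W : V * W = W * adjoint V
  σ_mul_W : σ * W = -(W * σ)
  commute_σ_V : Commute σ V
  isSelfAdjoint_σ : IsSelfAdjoint σ

/-- The paper's `T = X + iσY`, with `X` and `Y` the real and imaginary parts of `V`. -/
noncomputable def splitShift (V σ : H →L[ℂ] H) : H →L[ℂ] H :=
  (2 : ℂ)⁻¹ • (V + adjoint V + σ * (V - adjoint V))

lemma splitShift_eq_re_add_I_smul_σ_im (V σ : H →L[ℂ] H) :
    (2 : ℂ)⁻¹ • (V + adjoint V) + Complex.I • (σ ∘L ((2 * Complex.I)⁻¹ • (V - adjoint V))) =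
      splitShift V σ := by
  rw [splitShift, comp_smul, smul_smul,
    show Complex.I * (2 * Complex.I)⁻¹ = 2⁻¹ by field_simp, ← smul_add]
  rfl

namespace IsQuantumWalk

variable {V W σ : H →L[ℂ] H}

lemma adjoint_V_mul_V (hq : IsQuantumWalk V W σ) : adjoint V * V = 1 :=
  (Unitary.mem_iff.mp hq.V_mem_unitary).1

lemma V_mul_adjoint_V (hq : IsQuantumWalk V W σ) : V * adjoint V = 1 :=
  (Unitary.mem_iff.mp hq.V_mem_unitary).2

lemma commute_σ_adjoint_V (hq : IsQuantumWalk V W σ) : Commute σ (adjoint V) := by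
  simpa [hq.isSelfAdjoint_σ.star_eq, star_eq_adjoint] using hq.commute_σ_V.star_star

lemma W_mul_V (hq : IsQuantumWalk V W σ) : W * V = adjoint V * W := by
  calc W * V = adjoint V * (V * W) * V := by
        rw [← mul_assoc, hq.adjoint_V_mul_V, one_mul]
    _ = adjoint V * W := by rw [hq.V_mul_W, mul_assoc, mul_assoc, hq.adjoint_V_mul_V, mul_one]

lemma commute_V_splitShift (hq : IsQuantumWalk V W σ) : Commute V (splitShift V σ) := by
  have hVV : Commute V (adjoint V) := by
    rw [Commute, SemiconjBy, hq.V_mul_adjoint_V, hq.adjoint_V_mul_V]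
  exact (((Commute.refl V).add_right hVV).add_right
    (hq.commute_σ_V.symm.mul_right ((Commute.refl V).sub_right hVV))).smul_right _

lemma commute_σ_splitShift (hq : IsQuantumWalk V W σ) : Commute σ (splitShift V σ) :=
  ((hq.commute_σ_V.add_right hq.commute_σ_adjoint_V).add_right
    ((Commute.refl σ).mul_right (hq.commute_σ_V.sub_right hq.commute_σ_adjoint_V))).smul_right _

lemma commute_W_splitShift (hq : IsQuantumWalk V W σ) : Commute W (splitShift V σ) := by
  have hWV' : W * adjoint V = V * W := hq.V_mul_W.symm
  have hWσ : W * σ = -(σ * W) := by rw [hq.σ_mul_W, neg_neg]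
  refine Commute.smul_right ?_ _
  calc W * (V + adjoint V + σ * (V - adjoint V))
      = W * V + W * adjoint V + (W * σ) * (V - adjoint V) := by noncomm_ring
    _ = W * V + W * adjoint V - σ * (W * V - W * adjoint V) := by rw [hWσ]; noncomm_ring
    _ = (V + adjoint V + σ * (V - adjoint V)) * W := by rw [hq.W_mul_V, hWV']; noncomm_ring

lemma splitShift_apply_of_σ_apply_eq_self (hq : IsQuantumWalk V W σ) {u : H}
    (hu : σ u = u) : splitShift V σ u = V u := by
  have hV : σ (V u) = V u := by
    rw [← mul_apply_eq_comp, hq.commute_σ_V.eq, mul_apply_eq_comp, hu]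
  have hV' : σ (adjoint V u) = adjoint V u := by
    rw [← mul_apply_eq_comp, hq.commute_σ_adjoint_V.eq, mul_apply_eq_comp, hu]
  simp only [splitShift, smul_apply, add_apply, mul_apply_eq_comp, sub_apply, map_sub, hV, hV']
  module

lemma splitShift_apply_of_σ_apply_eq_neg (hq : IsQuantumWalk V W σ) {u : H}
    (hu : σ u = -u) : splitShift V σ u = adjoint V u := by
  have hV : σ (V u) = -V u := by
    rw [← mul_apply_eq_comp, hq.commute_σ_V.eq, mul_apply_eq_comp, hu, map_neg]
  have hV' : σ (adjoint V u) = -adjoint V u := by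
    rw [← mul_apply_eq_comp, hq.commute_σ_adjoint_V.eq, mul_apply_eq_comp, hu, map_neg]
  simp only [splitShift, smul_apply, add_apply, mul_apply_eq_comp, sub_apply, map_sub, hV, hV']
  module

lemma σ_apply_V_W (hq : IsQuantumWalk V W σ) {u : H} (hu : σ u = u) :
    σ (V (W u)) = -V (W u) := by
  have h : σ * V * W = -(V * W * σ) := by
    rw [hq.commute_σ_V.eq, mul_assoc, hq.σ_mul_W, mul_neg, mul_assoc]
  simpa [hu] using congr($h u)

variable {Tu : (H →L[ℂ] H)ˣ} {e : H}

lemma units_smul_eq_splitShift_apply (hTu : (Tu : H →L[ℂ] H) = splitShift V σ) (v : H) :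
    Tu • v = splitShift V σ v := by
  rw [Units.smul_def, hTu, ContinuousLinearMap.smul_def]

lemma V_zpow_smul_e (hq : IsQuantumWalk V W σ) (hTu : (Tu : H →L[ℂ] H) = splitShift V σ)
    (he : σ e = e) (x : ℤ) : V (Tu ^ x • e) = Tu ^ (x + 1) • e := by
  refine (hTu ▸ hq.commute_V_splitShift).smul_zpow_smul ?_ x
  rw [zpow_one, units_smul_eq_splitShift_apply hTu, hq.splitShift_apply_of_σ_apply_eq_self he]
  rfl

lemma V_zpow_smul_VWe (hq : IsQuantumWalk V W σ) (hTu : (Tu : H →L[ℂ] H) = splitShift V σ)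
    (he : σ e = e) (x : ℤ) : V (Tu ^ x • V (W e)) = Tu ^ (x - 1) • V (W e) := by
  have hσ : σ (V (V (W e))) = -V (V (W e)) := by
    rw [← mul_apply_eq_comp, hq.commute_σ_V.eq, mul_apply_eq_comp, hq.σ_apply_V_W he, map_neg]
  rw [sub_eq_add_neg]
  refine (hTu ▸ hq.commute_V_splitShift).smul_zpow_smul ?_ x
  rw [zpow_neg_one, eq_inv_smul_iff, units_smul_eq_splitShift_apply hTu,
    ContinuousLinearMap.smul_def, hq.splitShift_apply_of_σ_apply_eq_neg hσ, ← mul_apply_eq_comp,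
    hq.adjoint_V_mul_V, one_apply_eq_self]

lemma W_zpow_smul_e (hq : IsQuantumWalk V W σ) (hTu : (Tu : H →L[ℂ] H) = splitShift V σ)
    (he : σ e = e) (x : ℤ) : W (Tu ^ x • e) = Tu ^ (x + 1) • V (W e) := by
  refine (hTu ▸ hq.commute_W_splitShift).smul_zpow_smul ?_ x
  rw [zpow_one, units_smul_eq_splitShift_apply hTu, ContinuousLinearMap.smul_def,
    hq.splitShift_apply_of_σ_apply_eq_neg (hq.σ_apply_V_W he), ← mul_apply_eq_comp,
    hq.adjoint_V_mul_V, one_apply_eq_self]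

lemma W_zpow_smul_VWe (hq : IsQuantumWalk V W σ) (hTu : (Tu : H →L[ℂ] H) = splitShift V σ)
    (he : σ e = e) (x : ℤ) : W (Tu ^ x • V (W e)) = -(Tu ^ (x - 1) • e) := by
  have hσ : σ (adjoint V e) = adjoint V e := by
    rw [← mul_apply_eq_comp, hq.commute_σ_adjoint_V.eq, mul_apply_eq_comp, he]
  have hTVe : Tu • adjoint V e = e := by
    rw [units_smul_eq_splitShift_apply hTu, hq.splitShift_apply_of_σ_apply_eq_self hσ,
      ← mul_apply_eq_comp, hq.V_mul_adjoint_V, one_apply_eq_self]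
  have hWVW : W (V (W e)) = -adjoint V e := by
    rw [← mul_apply_eq_comp, ← mul_apply_eq_comp, hq.W_mul_V, mul_assoc, hq.W_mul_W]
    simp
  rw [sub_eq_add_neg, ← smul_neg]
  refine (hTu ▸ hq.commute_W_splitShift).smul_zpow_smul ?_ x
  rw [ContinuousLinearMap.smul_def, hWVW, zpow_neg_one, smul_neg, neg_inj, eq_inv_smul_iff, hTVe]

lemma σ_zpow_smul_e (hq : IsQuantumWalk V W σ) (hTu : (Tu : H →L[ℂ] H) = splitShift V σ)
    (he : σ e = e) (x : ℤ) : σ (Tu ^ x • e) = Tu ^ x • e := by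
  have h := (hTu ▸ hq.commute_σ_splitShift).smul_zpow_smul (k := 0) (w := e)
    (by rw [zpow_zero, one_smul]; exact he) x
  rwa [add_zero] at h

lemma σ_zpow_smul_VWe (hq : IsQuantumWalk V W σ) (hTu : (Tu : H →L[ℂ] H) = splitShift V σ)
    (he : σ e = e) (x : ℤ) : σ (Tu ^ x • V (W e)) = -(Tu ^ x • V (W e)) := by
  have h := (hTu ▸ hq.commute_σ_splitShift).smul_zpow_smul (k := 0) (w := -V (W e))
    (by rw [zpow_zero, one_smul]; exact hq.σ_apply_V_W he) x
  rwa [add_zero, smul_neg] at h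

lemma inner_pow_apply_V_W_self (hq : IsQuantumWalk V W σ)
    (horth : ∀ m : ℕ, 0 < m → inner ℂ ((V ^ m) e) e = 0) {m : ℕ} (hm : 0 < m) :
    inner ℂ ((V ^ m) (V (W e))) (V (W e)) = 0 := by
  have hW : ∀ x y : H, inner ℂ (W x) (W y) = inner ℂ x y :=
    (inner_map_map_iff_adjoint_comp_self W).mpr hq.adjoint_W_mul_W
  have hVmW : (V ^ m) * W = W * (adjoint V) ^ m :=
    (SemiconjBy.pow_right (hq.V_mul_W.symm : SemiconjBy W (adjoint V) V) m).eq.symm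
  rw [← mul_apply_eq_comp, ← pow_succ, pow_succ', mul_apply_eq_comp,
    Unitary.inner_map_map ⟨V, hq.V_mem_unitary⟩, ← mul_apply_eq_comp, hVmW, mul_apply_eq_comp,
    hW, ← star_eq_adjoint, ← star_pow, star_eq_adjoint, adjoint_inner_left, ← inner_conj_symm,
    horth m hm, map_zero]

lemma orthonormal_zpow_smul_e (hq : IsQuantumWalk V W σ)
    (hTu : (Tu : H →L[ℂ] H) = splitShift V σ) (he : σ e = e) (he1 : ‖e‖ = 1)
    (horth : ∀ m : ℕ, 0 < m → inner ℂ ((V ^ m) e) e = 0) :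
    Orthonormal ℂ (fun x : ℤ => Tu ^ x • e) := by
  let Vu : unitary (H →L[ℂ] H) := ⟨V, hq.V_mem_unitary⟩
  have h : ∀ x : ℤ, Tu ^ x • e = Vu ^ x • e := fun x => by
    simpa using eq_zpow_smul_of_smul_eq Vu (f := fun x => Tu ^ x • e) (hq.V_zpow_smul_e hTu he) x
  simpa [← h] using orthonormal_zpow_smul Vu he1 horth

lemma orthonormal_zpow_smul_VWe (hq : IsQuantumWalk V W σ)
    (hTu : (Tu : H →L[ℂ] H) = splitShift V σ) (he : σ e = e) (he1 : ‖e‖ = 1)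
    (horth : ∀ m : ℕ, 0 < m → inner ℂ ((V ^ m) e) e = 0) :
    Orthonormal ℂ (fun x : ℤ => Tu ^ x • V (W e)) := by
  let Vu : unitary (H →L[ℂ] H) := ⟨V, hq.V_mem_unitary⟩
  have hnorm : ‖V (W e)‖ = 1 := by
    rw [norm_map_of_mem_unitary hq.V_mem_unitary,
      (norm_map_iff_adjoint_comp_self W).mpr hq.adjoint_W_mul_W, he1]
  have h : ∀ x : ℤ, Tu ^ (-x) • V (W e) = Vu ^ x • V (W e) := fun x => by
    refine (eq_zpow_smul_of_smul_eq Vu (f := fun x => Tu ^ (-x) • V (W e)) (fun y => ?_) x).trans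
      (by simp)
    rw [neg_add, ← sub_eq_add_neg]
    exact hq.V_zpow_smul_VWe hTu he (-y)
  have ho := (orthonormal_zpow_smul Vu hnorm fun _ => hq.inner_pow_apply_V_W_self horth).comp
    (fun x : ℤ => -x) neg_injective
  simpa [Function.comp_def, ← h] using ho

lemma inner_zpow_smul_e_zpow_smul_VWe (hq : IsQuantumWalk V W σ)
    (hTu : (Tu : H →L[ℂ] H) = splitShift V σ) (he : σ e = e) (x y : ℤ) :
    inner ℂ (Tu ^ x • e) (Tu ^ y • V (W e)) = 0 :=
  hq.isSelfAdjoint_σ.inner_eq_zero_of_apply_eq_self_of_apply_eq_neg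
    (hq.σ_zpow_smul_e hTu he x) (hq.σ_zpow_smul_VWe hTu he y)

end IsQuantumWalk

end QuantumWalk

open ContinuousLinearMap

/-- The paper's inner product `⟨u, v⟩`, linear in the first variable, is Mathlib's `inner ℂ v u`. -/
theorem qw_coefficients
    {H : Type*} [NormedAddCommGroup H] [InnerProductSpace ℂ H] [CompleteSpace H]
    (V W σ X Y T Pp ε : H →L[ℂ] H)
    (hVu : adjoint V ∘L V = 1 ∧ V ∘L adjoint V = 1)
    (hWu : adjoint W ∘L W = 1 ∧ W ∘L adjoint W = 1)
    (hQW1 : W ∘L W = -1)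
    (hQW2 : V ∘L W = W ∘L adjoint V)
    (hQW3W : σ ∘L W + W ∘L σ = 0)
    (hQW3V : σ ∘L V - V ∘L σ = 0)
    (hQW4 : adjoint σ = σ)
    (hX : X = (2 : ℂ)⁻¹ • (V + adjoint V))
    (hY : Y = (2 * Complex.I)⁻¹ • (V - adjoint V))
    (hT : T = X + Complex.I • (σ ∘L Y))
    (hPp : Pp = (2 : ℂ)⁻¹ • (1 + σ))
    (hε : ε = V ∘L W)
    (e : H) (he : ‖e‖ = 1) (hePp : Pp e = e)
    (horth : ∀ m : ℕ, 0 < m → (inner ℂ ((V ^ m) e) e : ℂ) = 0)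
    (Tu : (H →L[ℂ] H)ˣ) (hTu : (Tu : H →L[ℂ] H) = T)
    (e1 e2 : ℤ → H)
    (he1 : ∀ x : ℤ, e1 x = ((Tu ^ x : (H →L[ℂ] H)ˣ) : H →L[ℂ] H) e)
    (he2 : ∀ x : ℤ, e2 x = ((Tu ^ x : (H →L[ℂ] H)ˣ) : H →L[ℂ] H) (ε e))
    (s t : ℝ)
    (hst : s ^ 2 + t ^ 2 = 1)
    (U : H →L[ℂ] H) (hU : U = (s : ℂ) • V + (t : ℂ) • W)
    (ψ₁ ψ₂ : ℂ)
    (Ψ : H) (hΨ : Ψ = ψ₁ • e1 0 + ψ₂ • e2 0)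
    :
    ∀ (n : ℕ) (x : ℤ),
      (inner ℂ (e1 x) ((U ^ n) Ψ) : ℂ) = ψ₁ * (pn1 s n).coeff x + ψ₂ * (qn1 s t n).coeff x ∧
      (inner ℂ (e2 x) ((U ^ n) Ψ) : ℂ) = ψ₁ * (pn2 s t n).coeff x + ψ₂ * (qn2 s n).coeff x := by
  have hq : IsQuantumWalk V W σ :=
    { V_mem_unitary := Unitary.mem_iff.mpr hVu
      adjoint_W_mul_W := hWu.1
      W_mul_W := hQW1
      V_mul_W := hQW2
      σ_mul_W := eq_neg_of_add_eq_zero_left hQW3W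
      commute_σ_V := sub_eq_zero.mp hQW3V
      isSelfAdjoint_σ := hQW4 }
  have hTu' : (Tu : H →L[ℂ] H) = splitShift V σ := by
    rw [hTu, hT, hX, hY, splitShift_eq_re_add_I_smul_σ_im]
  have hσe : σ e = e := apply_eq_self_of_half_one_add_apply_eq (hPp ▸ hePp)
  obtain rfl : e1 = fun x => Tu ^ x • e := funext he1
  obtain rfl : e2 = fun x => Tu ^ x • V (W e) := funext fun x => by rw [he2, hε]; rfl
  subst hU hΨ
  intro n x
  have hpow := walk_pow_apply (V := (V : H →ₗ[ℂ] H)) (W := W) hst (hq.V_zpow_smul_e hTu' hσe)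
    (hq.V_zpow_smul_VWe hTu' hσe) (hq.W_zpow_smul_e hTu' hσe) (hq.W_zpow_smul_VWe hTu' hσe)
    ψ₁ ψ₂ n
  have hcross := hq.inner_zpow_smul_e_zpow_smul_VWe hTu' hσe
  rw [← coe_coe, toLinearMap_pow, toLinearMap_add, toLinearMap_smul, toLinearMap_smul]
  simp only [hpow, inner_add_right,
    (hq.orthonormal_zpow_smul_e hTu' hσe he horth).inner_linearCombination_laurent,
    (hq.orthonormal_zpow_smul_VWe hTu' hσe he horth).inner_linearCombination_laurent,
    inner_linearCombination_eq_zero (hcross x),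
    inner_linearCombination_eq_zero fun y => inner_eq_zero_symm.mp (hcross y x)]
  simp
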